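/- arXiv:2410.07014 — 2 statements merged into one kernel-verified Lean document; each statement's English description precedes it below -/
import Mathlib

section
/- Let P be a random vector with law μ on R^d and let h, h* : R^d × R^d → R be measurable. Suppose h = h* holds μ⊗μ-almost surely, both h and h* are continuous at every diagonal point (p,p) for p outside a μ-null set, and μ has no atoms outside the interior of its support except countably many atoms on the boundary of the support. Then h(p,p) = h*(p,p) for μ-almost every p, and consequently E[h(P,P)] = E[h*(P,P)] (when the latter is integrable). -/
open MeasureTheory

noncomputable section

/-- The (closed) topological support of a Borel measure on `ℝ^d`:
points all of whose neighbourhoods have positive mass. -/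
def msupport {d : ℕ} (μ : Measure (EuclideanSpace ℝ (Fin d))) :
    Set (EuclideanSpace ℝ (Fin d)) :=
  {x | ∀ ε > (0 : ℝ), 0 < μ (Metric.ball x ε)}

/-- The complement of the support is `μ`-null (second countability). -/
lemma measure_compl_msupport {d : ℕ} (μ : Measure (EuclideanSpace ℝ (Fin d))) :
    μ (msupport μ)ᶜ = 0 := by
  classical
  -- every point outside the support has a null ball around it
  have hx : ∀ x : ↥((msupport μ)ᶜ), ∃ ε > (0 : ℝ), μ (Metric.ball (x : _) ε) = 0 := by
    rintro ⟨x, hx⟩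
    simp only [msupport, Set.mem_compl_iff, Set.mem_setOf_eq, not_forall] at hx
    obtain ⟨ε, hε, hle⟩ := hx
    exact ⟨ε, hε, by simpa using hle⟩
  choose ε hεpos hεnull using hx
  set s : ↥((msupport μ)ᶜ) → Set (EuclideanSpace ℝ (Fin d)) :=
    fun x => Metric.ball (x : _) (ε x) with hs
  obtain ⟨t, ht, htU⟩ := TopologicalSpace.isOpen_iUnion_countable s
    (fun x => Metric.isOpen_ball)
  have hsub : (msupport μ)ᶜ ⊆ ⋃ x ∈ t, s x := by
    intro x hxmem
    rw [htU]
    exact Set.mem_iUnion.2 ⟨⟨x, hxmem⟩, Metric.mem_ball_self (hεpos ⟨x, hxmem⟩)⟩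
  refine measure_mono_null hsub ?_
  exact (measure_biUnion_null_iff ht).2 fun x _ => hεnull x

/-- If `h = h*` holds `μ⊗μ`-a.s., both are continuous at `μ`-a.e. diagonal point, and the
mass of `μ` on the boundary of its support is carried by countably many atoms, then
`h(p,p) = h*(p,p)` for `μ`-a.e. `p`, and hence the diagonal expectations agree. -/
theorem diagonal_agreement_of_ae_eq {d : ℕ}
    (μ : Measure (EuclideanSpace ℝ (Fin d))) [IsProbabilityMeasure μ]
    (h hstar : EuclideanSpace ℝ (Fin d) × EuclideanSpace ℝ (Fin d) → ℝ)
    (hmeas : Measurable h) (hstarmeas : Measurable hstar)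
    -- `h = h*` holds `μ⊗μ`-almost surely
    (hae : h =ᵐ[μ.prod μ] hstar)
    -- continuity at the diagonal outside a `μ`-null set
    (hcont : ∃ N : Set (EuclideanSpace ℝ (Fin d)), μ N = 0 ∧
      ∀ p ∉ N, ContinuousAt h (p, p) ∧ ContinuousAt hstar (p, p))
    -- the boundary of the support carries only countably many atoms of `μ`
    (hbd : ∃ S : Set (EuclideanSpace ℝ (Fin d)), S.Countable ∧
      S ⊆ frontier (msupport μ) ∧ (∀ s ∈ S, 0 < μ {s}) ∧
      μ (frontier (msupport μ) \ S) = 0)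
    -- integrability of the diagonal functions
    (hint : Integrable (fun p => h (p, p)) μ)
    (hstarint : Integrable (fun p => hstar (p, p)) μ) :
    (∀ᵐ p ∂μ, h (p, p) = hstar (p, p)) ∧
      (∫ p, h (p, p) ∂μ) = ∫ p, hstar (p, p) ∂μ := by
  obtain ⟨N, hN0, hNc⟩ := hcont
  -- the set where h ≠ h* is (μ⊗μ)-null
  have hE : μ.prod μ {x | h x ≠ hstar x} = 0 := hae
  have key : ∀ᵐ p ∂μ, h (p, p) = hstar (p, p) := by
    have hB : μ (N ∪ (msupport μ)ᶜ) = 0 :=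
      measure_union_null hN0 (measure_compl_msupport μ)
    refine measure_mono_null ?_ hB
    intro p hp
    simp only [Set.mem_setOf_eq] at hp
    by_contra hpB
    simp only [Set.mem_union, Set.mem_compl_iff, not_or, not_not] at hpB
    obtain ⟨hpN, hpS⟩ := hpB
    obtain ⟨hch, hch'⟩ := hNc p hpN
    -- h - h* is continuous at (p,p) and nonzero there, hence nonzero on a neighborhood
    have hcg : ContinuousAt (fun x => h x - hstar x) (p, p) := hch.sub hch'
    have hgne : (fun x => h x - hstar x) (p, p) ≠ 0 := sub_ne_zero.2 hp
    have hnb : {x | h x ≠ hstar x} ∈ nhds (p, p) := by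
      have := hcg.eventually_ne hgne
      filter_upwards [this] with x hx
      exact sub_ne_zero.1 hx
    obtain ⟨ε, hε, hball⟩ := Metric.mem_nhds_iff.1 hnb
    have hprodball : Metric.ball p ε ×ˢ Metric.ball p ε ⊆ {x | h x ≠ hstar x} := by
      rw [ball_prod_same]; exact hball
    have hle : μ.prod μ (Metric.ball p ε ×ˢ Metric.ball p ε) ≤ 0 := by
      rw [← hE]
      exact measure_mono hprodball
    rw [Measure.prod_prod] at hle
    have hpos : 0 < μ (Metric.ball p ε) := hpS ε hε
    have : (0 : ENNReal) < μ (Metric.ball p ε) * μ (Metric.ball p ε) :=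
      ENNReal.mul_pos hpos.ne' hpos.ne'
    exact absurd (le_antisymm hle zero_le) this.ne'
  exact ⟨key, integral_congr_ae key⟩

end
end

section
/- Let K ∈ R^{n×n} be symmetric positive semidefinite with eigendecomposition K = Q Λ Qᵀ (Q orthogonal, Λ diagonal with entries λ₁,…,λₙ), let λ > 0, M ∈ R^{n×n}, and a, b ∈ R^n. Then vecᵀ(M) (K ⊗ K + λ n² I)^{−1} (a ⊗ b) = bᵀ Q (Λ̃ ⊙ (Qᵀ M Q)) Qᵀ a, where Λ̃ ∈ R^{n×n} has entries Λ̃_{ij} = 1/(λᵢ λⱼ + λ n²) and ⊙ is the Hadamard (entrywise) product. -/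
open Matrix
open scoped Kronecker

noncomputable section

def matVec {n : ℕ} (C : Matrix (Fin n) (Fin n) ℝ) : Fin n × Fin n → ℝ :=
  fun x => C x.2 x.1

def vecKron {n : ℕ} (a b : Fin n → ℝ) : Fin n × Fin n → ℝ :=
  fun x => a x.1 * b x.2

lemma kron_mulVec_vecKron {n : ℕ} (A B : Matrix (Fin n) (Fin n) ℝ) (x y : Fin n → ℝ) :
    (A ⊗ₖ B) *ᵥ vecKron x y = vecKron (A *ᵥ x) (B *ᵥ y) := by
  ext ⟨i, j⟩
  simp only [mulVec, dotProduct, vecKron, kroneckerMap_apply, Fintype.sum_prod_type]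
  rw [Finset.sum_mul_sum]
  exact Finset.sum_congr rfl fun p _ => Finset.sum_congr rfl fun q _ => by ring

lemma kron_mulVec_matVec {n : ℕ} (A B M : Matrix (Fin n) (Fin n) ℝ) :
    (A ⊗ₖ B) *ᵥ matVec M = matVec (B * M * Aᵀ) := by
  ext ⟨i, j⟩
  simp only [mulVec, dotProduct, matVec, Matrix.mul_apply, kroneckerMap_apply,
    Fintype.sum_prod_type, transpose_apply, Finset.sum_mul, Finset.mul_sum]
  exact Finset.sum_congr rfl fun p _ => Finset.sum_congr rfl fun q _ => by ring

lemma kron_transpose' {n : ℕ} (A B : Matrix (Fin n) (Fin n) ℝ) :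
    ((A ⊗ₖ B)ᵀ : Matrix (Fin n × Fin n) (Fin n × Fin n) ℝ) = Aᵀ ⊗ₖ Bᵀ := by
  ext ⟨i, j⟩ ⟨p, q⟩
  rfl

lemma lhs_reduce {n : ℕ} (Q M : Matrix (Fin n) (Fin n) ℝ) (d : Fin n × Fin n → ℝ)
    (v w : Fin n → ℝ) :
    matVec M ⬝ᵥ ((Q ⊗ₖ Q) * Matrix.diagonal d * (Qᵀ ⊗ₖ Qᵀ)) *ᵥ vecKron v w
      = matVec (Qᵀ * M * Q) ⬝ᵥ (Matrix.diagonal d *ᵥ vecKron (Qᵀ *ᵥ v) (Qᵀ *ᵥ w)) := by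
  rw [← Matrix.mulVec_mulVec, ← Matrix.mulVec_mulVec, kron_mulVec_vecKron,
    Matrix.dotProduct_mulVec, ← Matrix.mulVec_transpose, kron_transpose',
    kron_mulVec_matVec, Matrix.transpose_transpose]

lemma rhs_reduce {n : ℕ} (Q H : Matrix (Fin n) (Fin n) ℝ) (a b : Fin n → ℝ) :
    b ⬝ᵥ (Q * H * Qᵀ) *ᵥ a = (Qᵀ *ᵥ b) ⬝ᵥ (H *ᵥ (Qᵀ *ᵥ a)) := by
  rw [← Matrix.mulVec_mulVec, ← Matrix.mulVec_mulVec, Matrix.dotProduct_mulVec,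
    ← Matrix.mulVec_transpose]

lemma final_sum {n : ℕ} (N Λt : Matrix (Fin n) (Fin n) ℝ) (d : Fin n × Fin n → ℝ)
    (h : ∀ i j, Λt i j = d (j, i)) (x y : Fin n → ℝ) :
    matVec N ⬝ᵥ (Matrix.diagonal d *ᵥ vecKron x y) = y ⬝ᵥ (Λt.hadamard N) *ᵥ x := by
  have hdv : (Matrix.diagonal d *ᵥ vecKron x y) = fun p => d p * vecKron x y p := by
    ext p; rw [Matrix.mulVec_diagonal]
  rw [hdv]
  simp only [dotProduct, matVec, vecKron, mulVec, hadamard_apply,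
    Fintype.sum_prod_type, Finset.mul_sum]
  rw [Finset.sum_comm]
  exact Finset.sum_congr rfl fun q _ => Finset.sum_congr rfl fun p _ => by rw [h q p]; ring

/-- The `O(n³)` reduction for the Kronecker kernel ridge regression predictor:
`vecᵀ(M) (K ⊗ K + λn²I)⁻¹ (a ⊗ b) = bᵀ Q (Λ̃ ⊙ (Qᵀ M Q)) Qᵀ a` where `K = Q Λ Qᵀ` and
`Λ̃_{ij} = 1/(λᵢλⱼ + λn²)`. -/
theorem kronecker_krr_eigen_reduction {n : ℕ}
    (K Q M : Matrix (Fin n) (Fin n) ℝ) (lam : Fin n → ℝ) (l : ℝ) (hl : 0 < l)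
    (hK : K.PosSemidef)
    (hdecomp : K = Q * Matrix.diagonal lam * Qᵀ)
    (hQ1 : Q * Qᵀ = 1) (hQ2 : Qᵀ * Q = 1)
    (a b : Fin n → ℝ)
    (Λt : Matrix (Fin n) (Fin n) ℝ)
    (hΛt : Λt = Matrix.of fun i j => 1 / (lam i * lam j + l * (n : ℝ) ^ 2)) :
    matVec M ⬝ᵥ
        ((K ⊗ₖ K + (l * (n : ℝ) ^ 2) •
            (1 : Matrix (Fin n × Fin n) (Fin n × Fin n) ℝ))⁻¹).mulVec (vecKron a b)
      = b ⬝ᵥ (Q * (Λt.hadamard (Qᵀ * M * Q)) * Qᵀ).mulVec a := by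
  rcases Nat.eq_zero_or_pos n with hn | hn
  · subst hn
    simp [dotProduct]
  set c : ℝ := l * (n : ℝ) ^ 2 with hc
  have hcpos : 0 < c := by
    have : (0:ℝ) < (n:ℝ) := by exact_mod_cast hn
    positivity
  have hlam : ∀ i, 0 ≤ lam i := by
    have hQH : Qᴴ = Qᵀ := by ext i j; simp [conjTranspose_apply]
    have h1 : (Qᴴ * K * Q).PosSemidef := hK.conjTranspose_mul_mul_same Q
    rw [hQH, hdecomp] at h1
    have h2 : Qᵀ * (Q * Matrix.diagonal lam * Qᵀ) * Q = Matrix.diagonal lam := by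
      simp only [← Matrix.mul_assoc]
      rw [hQ2, Matrix.one_mul, Matrix.mul_assoc, hQ2, Matrix.mul_one]
    rw [h2] at h1
    exact fun i => Matrix.posSemidef_diagonal_iff.mp h1 i
  have hed : ∀ p : Fin n × Fin n, lam p.1 * lam p.2 + c ≠ 0 := fun p =>
    ne_of_gt (add_pos_of_nonneg_of_pos (mul_nonneg (hlam p.1) (hlam p.2)) hcpos)
  set d : Fin n × Fin n → ℝ := fun p => 1 / (lam p.1 * lam p.2 + c) with hd
  have hPPt : (Q ⊗ₖ Q) * (Qᵀ ⊗ₖ Qᵀ) = 1 := by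
    rw [← Matrix.mul_kronecker_mul, hQ1, Matrix.one_kronecker_one]
  have hPtP : (Qᵀ ⊗ₖ Qᵀ) * (Q ⊗ₖ Q) = 1 := by
    rw [← Matrix.mul_kronecker_mul, hQ2, Matrix.one_kronecker_one]
  have hA : K ⊗ₖ K + c • (1 : Matrix (Fin n × Fin n) (Fin n × Fin n) ℝ)
      = (Q ⊗ₖ Q) * Matrix.diagonal (fun p : Fin n × Fin n => lam p.1 * lam p.2 + c)
        * (Qᵀ ⊗ₖ Qᵀ) := by
    have hde : Matrix.diagonal (fun p : Fin n × Fin n => lam p.1 * lam p.2 + c)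
        = Matrix.diagonal (fun p : Fin n × Fin n => lam p.1 * lam p.2) + c • 1 := by
      ext i j
      by_cases h : i = j <;>
        simp [Matrix.diagonal_apply, Matrix.one_apply, h]
    rw [hde, Matrix.mul_add, Matrix.add_mul, ← Matrix.diagonal_kronecker_diagonal,
      ← Matrix.mul_kronecker_mul, ← Matrix.mul_kronecker_mul, ← hdecomp]
    congr 1
    rw [Matrix.mul_smul, Matrix.smul_mul, Matrix.mul_one, hPPt]
  have hAinv : (K ⊗ₖ K + c • (1 : Matrix (Fin n × Fin n) (Fin n × Fin n) ℝ))⁻¹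
      = (Q ⊗ₖ Q) * Matrix.diagonal d * (Qᵀ ⊗ₖ Qᵀ) := by
    apply Matrix.inv_eq_right_inv
    rw [hA]
    calc (Q ⊗ₖ Q) * Matrix.diagonal (fun p : Fin n × Fin n => lam p.1 * lam p.2 + c)
          * (Qᵀ ⊗ₖ Qᵀ) * ((Q ⊗ₖ Q) * Matrix.diagonal d * (Qᵀ ⊗ₖ Qᵀ))
        = (Q ⊗ₖ Q) * (Matrix.diagonal (fun p : Fin n × Fin n => lam p.1 * lam p.2 + c)
            * Matrix.diagonal d) * (Qᵀ ⊗ₖ Qᵀ) := by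
          rw [Matrix.mul_assoc ((Q ⊗ₖ Q) * _), Matrix.mul_assoc (Q ⊗ₖ Q) (Matrix.diagonal d)]
          rw [← Matrix.mul_assoc (Qᵀ ⊗ₖ Qᵀ), hPtP, Matrix.one_mul]
          rw [Matrix.mul_assoc, Matrix.mul_assoc, Matrix.mul_assoc]
      _ = 1 := by
          rw [Matrix.diagonal_mul_diagonal]
          have hone : (fun p : Fin n × Fin n => (lam p.1 * lam p.2 + c) * d p)
              = fun _ => (1:ℝ) := by
            funext p
            rw [hd]
            rw [mul_one_div, div_self (hed p)]
          rw [hone, Matrix.diagonal_one, Matrix.mul_one, hPPt]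
  rw [hAinv, lhs_reduce, rhs_reduce]
  exact final_sum _ _ d (fun i j => by rw [hΛt]; simp only [of_apply, hd]; rw [mul_comm]) _ _
end
end
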